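/- For every real ε > 0 there exists an instance with common requirements such that the ratio m/m' of the optimal single-instanced machine count to the optimal multi-instanced machine count satisfies 2(1 − ε) < m/m' < 2. Concretely, for n > 2 applications with q_i = 1, Q = 3, p = n, P = 2n − 1, we have m = n and m' = ⌈n²/(2n − 1)⌉, and n / ⌈n²/(2n−1)⌉ → 2 as n → ∞. -/

import Mathlib

/-- Single-instanced model: `n` applications with unit memory and load `n` each,
machines with memory capacity `3` and CPU capacity `2n - 1`. -/
def FeasibleSingle (n k : ℕ) (f : Fin n → Fin k) : Prop :=
  ∀ j, (Finset.univ.filter (fun i => f i = j)).card ≤ 3 ∧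
       ((Finset.univ.filter (fun i => f i = j)).card : ℚ) * (n : ℚ) ≤ 2 * n - 1

/-- Multi-instanced model for the same instance family. -/
def FeasibleMulti (n k : ℕ) (x : Fin n → Fin k → ℚ) : Prop :=
  (∀ i j, 0 ≤ x i j) ∧
  (∀ i, (n : ℚ) ≤ ∑ j, x i j) ∧
  (∀ j, ∑ i, x i j ≤ 2 * (n : ℚ) - 1) ∧
  (∀ j, (Finset.univ.filter (fun i => x i j ≠ 0)).card ≤ 3)

/-!
Two machines cannot share an application of load `n` when their capacity is `2n - 1`, so the
single-instanced optimum is `n`. In the multi-instanced model the total load `n²` forces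
`k (2n - 1) ≥ n²`; conversely, when this holds, lay the applications end to end as intervals of
length `n` and the machines as intervals of length `2n - 1` on one line, and put on machine `j`
the part of application `i` lying in the intersection of their intervals. A machine interval is
shorter than two application intervals, so it meets at most three of them. The ratio
`n / ⌈n² / (2n - 1)⌉` lies between `n (2n - 1) / (n² + 2n - 1)` and `2`.
-/

open Finset

theorem Finset.card_le_of_forall_lt_add {S : Finset ℕ} {d : ℕ}
    (h : ∀ u ∈ S, ∀ v ∈ S, v < u + d) : #S ≤ d := by
  rcases S.eq_empty_or_nonempty with rfl | hS
  · simp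
  calc #S ≤ #(Ico (S.min' hS) (S.min' hS + d)) :=
        card_le_card fun v hv => mem_Ico.2 ⟨S.min'_le v hv, h _ (S.min'_mem hS) v hv⟩
    _ = d := by simp

section Overlap

variable {K : Type*} [Field K] [LinearOrder K] [IsStrictOrderedRing K] {s t : K}

/-- The length of `[0, a s) ∩ [0, b t)` for `s, t ≥ 0`. -/
def prefixOverlap (s t : K) (a b : ℕ) : K := min (a * s) (b * t)

/-- The length of `[i s, (i + 1) s) ∩ [j t, (j + 1) t)` for `s, t ≥ 0`, written as a mixed
second difference of `prefixOverlap` so that its row and column sums telescope. -/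
def overlap (s t : K) (i j : ℕ) : K :=
  prefixOverlap s t (i + 1) (j + 1) - prefixOverlap s t (i + 1) j
    - (prefixOverlap s t i (j + 1) - prefixOverlap s t i j)

theorem overlap_nonneg (hs : 0 ≤ s) (ht : 0 ≤ t) (i j : ℕ) : 0 ≤ overlap s t i j := by
  have hi : (i : K) * s ≤ (i + 1) * s := by nlinarith
  have hj : (j : K) * t ≤ (j + 1) * t := by nlinarith
  simp only [overlap, prefixOverlap, Nat.cast_succ, min_def]
  split_ifs <;> linarith

theorem lt_of_overlap_ne_zero (hs : 0 ≤ s) (ht : 0 ≤ t) {i j : ℕ} (h : overlap s t i j ≠ 0) :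
    j * t < (i + 1) * s ∧ i * s < (j + 1) * t := by
  have hi : (i : K) * s ≤ (i + 1) * s := by nlinarith
  have hj : (j : K) * t ≤ (j + 1) * t := by nlinarith
  by_contra hc
  rw [not_and_or, not_lt, not_lt] at hc
  apply h
  simp only [overlap, prefixOverlap, Nat.cast_succ, min_def]
  rcases hc with hc | hc <;> split_ifs <;> linarith

theorem sum_overlap_row (hs : 0 ≤ s) {i k : ℕ} (hk : (i + 1) * s ≤ k * t) :
    ∑ j : Fin k, overlap s t i j = s := by
  let g b := prefixOverlap s t (i + 1) b - prefixOverlap s t i b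
  calc ∑ j : Fin k, overlap s t i j = ∑ j ∈ range k, (g (j + 1) - g j) := by
        rw [← Fin.sum_univ_eq_sum_range]
        exact sum_congr rfl fun j _ => by simp only [g, overlap]; ring
    _ = s := by
        rw [sum_range_sub]
        have hi : (i : K) * s ≤ (i + 1) * s := by nlinarith
        simp only [g, prefixOverlap, Nat.cast_succ, Nat.cast_zero, zero_mul]
        rw [min_eq_left hk, min_eq_left (hi.trans hk), min_eq_right (by positivity),
          min_eq_right (by positivity)]
        ring

theorem sum_overlap_col_le (ht : 0 ≤ t) (n j : ℕ) : ∑ i : Fin n, overlap s t i j ≤ t := by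
  let g a := prefixOverlap s t a (j + 1) - prefixOverlap s t a j
  calc ∑ i : Fin n, overlap s t i j = ∑ i ∈ range n, (g (i + 1) - g i) := by
        rw [← Fin.sum_univ_eq_sum_range]; rfl
    _ ≤ t := by
        rw [sum_range_sub]
        have hj : (j : K) * t ≤ (j + 1) * t := by nlinarith
        simp only [g, prefixOverlap, Nat.cast_succ, Nat.cast_zero, zero_mul, min_def]
        split_ifs <;> nlinarith

theorem lt_add_three_of_overlap_ne_zero (hs : 0 < s) (ht : 0 ≤ t) (hts : t < 2 * s)
    {i₁ i₂ j : ℕ} (h₁ : overlap s t i₁ j ≠ 0) (h₂ : overlap s t i₂ j ≠ 0) : i₂ < i₁ + 3 := by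
  obtain ⟨hj₁, -⟩ := lt_of_overlap_ne_zero hs.le ht h₁
  obtain ⟨-, hj₂⟩ := lt_of_overlap_ne_zero hs.le ht h₂
  have : (i₂ : K) * s < (i₁ + 3) * s := by linarith
  exact_mod_cast lt_of_mul_lt_mul_right this hs.le

theorem card_overlap_ne_zero_le_three (hs : 0 < s) (ht : 0 ≤ t) (hts : t < 2 * s) (n j : ℕ) :
    #{i : Fin n | overlap s t i j ≠ 0} ≤ 3 := by
  rw [← card_map Fin.valEmbedding]
  refine card_le_of_forall_lt_add ?_
  simp only [mem_map, mem_filter, mem_univ, true_and, Fin.valEmbedding_apply]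
  rintro _ ⟨i₁, h₁, rfl⟩ _ ⟨i₂, h₂, rfl⟩
  exact lt_add_three_of_overlap_ne_zero hs ht hts h₁ h₂

end Overlap

section Instance

variable {n k : ℕ}

theorem feasibleSingle_iff_injective (hn : 1 ≤ n) {f : Fin n → Fin k} :
    FeasibleSingle n k f ↔ Function.Injective f := by
  have hn' : (1 : ℚ) ≤ n := by exact_mod_cast hn
  have fiber_le_one : ∀ c : ℕ, (c ≤ 3 ∧ (c : ℚ) * n ≤ 2 * n - 1) ↔ c ≤ 1 := by
    intro c
    constructor
    · rintro ⟨-, hc⟩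
      by_contra! h2
      have : (2 : ℚ) ≤ c := by exact_mod_cast h2
      nlinarith
    · intro hc
      have : (c : ℚ) ≤ 1 := by exact_mod_cast hc
      exact ⟨by omega, by nlinarith⟩
  simp only [FeasibleSingle, fiber_le_one, card_le_one, mem_filter, mem_univ, true_and]
  exact ⟨fun h a b hab => h (f a) a rfl b hab.symm, fun h j a ha b hb => h (ha.trans hb.symm)⟩

theorem setOf_exists_feasibleSingle (hn : 1 ≤ n) :
    {k | ∃ f : Fin n → Fin k, FeasibleSingle n k f} = Set.Ici n := by
  ext k
  simp only [feasibleSingle_iff_injective hn, Set.mem_ofPred_eq, Set.mem_Ici]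
  exact ⟨fun ⟨f, hf⟩ => by simpa using Fintype.card_le_of_injective f hf,
    fun h => ⟨Fin.castLE h, Fin.castLE_injective h⟩⟩

theorem sq_le_of_feasibleMulti {x : Fin n → Fin k → ℚ} (hx : FeasibleMulti n k x) :
    (n : ℚ) ^ 2 ≤ k * (2 * n - 1) := by
  obtain ⟨-, hrow, hcol, -⟩ := hx
  calc (n : ℚ) ^ 2 = ∑ _i : Fin n, (n : ℚ) := by simp [sq]
    _ ≤ ∑ i, ∑ j, x i j := sum_le_sum fun i _ => hrow i
    _ = ∑ j, ∑ i, x i j := sum_comm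
    _ ≤ ∑ _j : Fin k, (2 * n - 1 : ℚ) := sum_le_sum fun j _ => hcol j
    _ = k * (2 * n - 1) := by simp [mul_sub]

theorem feasibleMulti_overlap (hn : 1 ≤ n) (hk : (n : ℚ) ^ 2 ≤ k * (2 * n - 1)) :
    FeasibleMulti n k fun i j => overlap (n : ℚ) (2 * n - 1) i j := by
  have hn' : (1 : ℚ) ≤ n := by exact_mod_cast hn
  have hs : (0 : ℚ) < n := by linarith
  have ht : (0 : ℚ) ≤ 2 * n - 1 := by linarith
  refine ⟨fun i j => overlap_nonneg hs.le ht i j, fun i => ?_,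
    fun j => sum_overlap_col_le ht n j,
    fun j => card_overlap_ne_zero_le_three hs ht (by linarith) n j⟩
  have hi : ((i : ℕ) : ℚ) + 1 ≤ n := by exact_mod_cast i.isLt
  rw [sum_overlap_row hs.le (by nlinarith)]

theorem setOf_exists_feasibleMulti (hn : 1 ≤ n) :
    {k | ∃ x : Fin n → Fin k → ℚ, FeasibleMulti n k x} =
      Set.Ici ⌈(n : ℚ) ^ 2 / (2 * n - 1)⌉₊ := by
  have h2n : (0 : ℚ) < 2 * n - 1 := by
    have : (1 : ℚ) ≤ n := by exact_mod_cast hn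
    linarith
  ext k
  simp only [Set.mem_ofPred_eq, Set.mem_Ici, Nat.ceil_le, div_le_iff₀ h2n]
  exact ⟨fun ⟨_, hx⟩ => sq_le_of_feasibleMulti hx, fun hk => ⟨_, feasibleMulti_overlap hn hk⟩⟩

end Instance

section Ratio

variable {n : ℕ}

theorem div_ceil_lt_two (hn : 1 ≤ n) : (n : ℚ) / ⌈(n : ℚ) ^ 2 / (2 * n - 1)⌉₊ < 2 := by
  have hn' : (1 : ℚ) ≤ n := by exact_mod_cast hn
  have h2n : (0 : ℚ) < 2 * n - 1 := by linarith
  have hle : (n : ℚ) ^ 2 / (2 * n - 1) ≤ ⌈(n : ℚ) ^ 2 / (2 * n - 1)⌉₊ := Nat.le_ceil _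
  have hpos : (0 : ℚ) < n ^ 2 / (2 * n - 1) := by positivity
  rw [div_lt_iff₀ (hpos.trans_le hle)]
  rw [div_le_iff₀ h2n] at hle
  nlinarith

theorem two_mul_one_sub_lt_div_ceil {ε : ℚ} (hn : 1 ≤ n) (hnε : 5 ≤ 2 * ε * n) :
    2 * (1 - ε) < (n : ℚ) / ⌈(n : ℚ) ^ 2 / (2 * n - 1)⌉₊ := by
  have hn' : (1 : ℚ) ≤ n := by exact_mod_cast hn
  have h2n : (0 : ℚ) < 2 * n - 1 := by linarith
  have hpos : (0 : ℚ) < n ^ 2 / (2 * n - 1) := by positivity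
  have hlt : (⌈(n : ℚ) ^ 2 / (2 * n - 1)⌉₊ : ℚ) < (n ^ 2 + (2 * n - 1)) / (2 * n - 1) := by
    have := Nat.ceil_lt_add_one hpos.le
    rwa [div_add_one h2n.ne'] at this
  calc 2 * (1 - ε) ≤ n / ((n ^ 2 + (2 * n - 1)) / (2 * n - 1)) := by
        rw [div_div_eq_mul_div, le_div_iff₀ (by positivity)]
        nlinarith
    _ < (n : ℚ) / ⌈(n : ℚ) ^ 2 / (2 * n - 1)⌉₊ :=
        div_lt_div_of_pos_left (by positivity) (hpos.trans_le (Nat.le_ceil _)) hlt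

end Ratio

/-- For every `ε > 0` there is an instance (with `q_i = 1`, `Q = 3`, `p = n`,
`P = 2n - 1`) on which the single-instanced optimum is `m = n`, the
multi-instanced optimum is `m' = ⌈n²/(2n-1)⌉`, and `2(1-ε) < m/m' < 2`. -/
theorem ratio_approaches_two (ε : ℚ) (hε : 0 < ε) :
    ∃ n : ℕ, 2 < n ∧
      IsLeast {k : ℕ | ∃ f : Fin n → Fin k, FeasibleSingle n k f} n ∧
      IsLeast {k : ℕ | ∃ x : Fin n → Fin k → ℚ, FeasibleMulti n k x}
        ⌈(n : ℚ)^2 / (2 * n - 1)⌉₊ ∧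
      2 * (1 - ε) < (n : ℚ) / (⌈(n : ℚ)^2 / (2 * n - 1)⌉₊ : ℚ) ∧
      (n : ℚ) / (⌈(n : ℚ)^2 / (2 * n - 1)⌉₊ : ℚ) < 2 := by
  obtain ⟨n, hn3, hnε⟩ := ((Filter.eventually_ge_atTop 3).and
    (tendsto_natCast_atTop_atTop.eventually_ge_atTop (5 / (2 * ε)))).exists
  have hn : 1 ≤ n := by omega
  refine ⟨n, hn3, ?_, ?_, two_mul_one_sub_lt_div_ceil hn ?_, div_ceil_lt_two hn⟩
  · rw [setOf_exists_feasibleSingle hn]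
    exact isLeast_Ici
  · rw [setOf_exists_feasibleMulti hn]
    exact isLeast_Ici
  · rwa [div_le_iff₀' (by positivity)] at hnε
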